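/- arXiv:1805.02090 — 2 statements merged into one kernel-verified Lean document; each statement's English description precedes it below -/
import Mathlib

section
/- (Schur's first multiplier theorem) Let A be a Schur ring over a finite abelian group G, X a basic set of A, and m an integer coprime to |G|. Then X^(m) = {x^m : x ∈ X} is again a basic set of A. Equivalently, the automorphism g ↦ g^m of G is a Cayley isomorphism from A onto itself. -/
open scoped BigOperators

/-- The indicator element `X̲ = Σ_{x∈X} x` of a finset in the integral group ring `ℤG`. -/
noncomputable def grpInd {G : Type*} [Group G] (X : Finset G) : MonoidAlgebra ℤ G :=
  ∑ x ∈ X, MonoidAlgebra.single x (1 : ℤ)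

/-- A Schur ring over a finite group `G`: a partition of `G` containing `{1}`,
closed under inverses, whose indicator elements span a subring of `ℤG`. -/
structure SchurRing (G : Type*) [Group G] [Fintype G] [DecidableEq G] where
  parts : Finset (Finset G)
  nonempty_mem : ∀ X ∈ parts, X.Nonempty
  cover : ∀ g : G, ∃ X ∈ parts, g ∈ X
  pairwise_disjoint : ∀ X ∈ parts, ∀ Y ∈ parts, X ≠ Y → Disjoint X Y
  one_mem : ({1} : Finset G) ∈ parts
  inv_mem : ∀ X ∈ parts, X.image (·⁻¹) ∈ parts
  mul_mem : ∀ X ∈ parts, ∀ Y ∈ parts, ∃ c : Finset G → ℤ,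
    grpInd X * grpInd Y = ∑ Z ∈ parts, c Z • grpInd Z

namespace SchurRing

variable {G : Type*} [Group G] [Fintype G] [DecidableEq G]

/-- The underlying `ℤ`-module of the Schur ring: the span of the indicators of basic sets. -/
noncomputable def carrier (A : SchurRing G) : Submodule ℤ (MonoidAlgebra ℤ G) :=
  Submodule.span ℤ {v | ∃ X ∈ A.parts, v = grpInd X}

/-- `X ⊆ G` is an `A`-set if its indicator lies in `A`. -/
def IsASet (A : SchurRing G) (X : Finset G) : Prop := grpInd X ∈ A.carrier

/-- `A` is a subring of `B` (as S-rings over the same group). -/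
def le (A B : SchurRing G) : Prop := ∀ X ∈ A.parts, grpInd X ∈ B.carrier

end SchurRing

/-- An algebraic isomorphism of Schur rings: a bijection of basic sets preserving all
structure constants (the structure constant `c^Z_{X,Y}` is the coefficient of the
product `X̲·Y̲` at any `z ∈ Z`). -/
def IsAlgIso {G G' : Type*} [Group G] [Fintype G] [DecidableEq G]
    [Group G'] [Fintype G'] [DecidableEq G']
    (A : SchurRing G) (A' : SchurRing G') (φ : Finset G → Finset G') : Prop :=
  Set.BijOn φ ↑A.parts ↑A'.parts ∧
  ∀ X ∈ A.parts, ∀ Y ∈ A.parts, ∀ Z ∈ A.parts, ∀ z ∈ Z, ∀ z' ∈ φ Z,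
    (grpInd X * grpInd Y).coeff z = (grpInd (φ X) * grpInd (φ Y)).coeff z'

/-- A combinatorial isomorphism of Schur rings: a bijection `G → G'` mapping basic sets to
basic sets and inducing a Cayley graph isomorphism on each basic set. -/
def IsCombIso {G G' : Type*} [Group G] [Fintype G] [DecidableEq G]
    [Group G'] [Fintype G'] [DecidableEq G']
    (A : SchurRing G) (A' : SchurRing G') (f : G → G') : Prop :=
  Function.Bijective f ∧
  ∀ X ∈ A.parts, X.image f ∈ A'.parts ∧
    ∀ g h : G, h * g⁻¹ ∈ X ↔ f h * (f g)⁻¹ ∈ X.image f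

/-- An automorphism of a Schur ring: a permutation of `G` preserving the edge set of
`Cay(G,X)` for every basic set `X`. -/
def IsSchurAut {G : Type*} [Group G] [Fintype G] [DecidableEq G]
    (A : SchurRing G) (f : G → G) : Prop :=
  Function.Bijective f ∧ ∀ X ∈ A.parts, ∀ g h : G, h * g⁻¹ ∈ X ↔ f h * (f g)⁻¹ ∈ X

/-- Separability with respect to the class of (finite) abelian groups. -/
def SchurRing.IsSeparableAbelian {G : Type} [Group G] [Fintype G] [DecidableEq G]
    (A : SchurRing G) : Prop :=
  ∀ (G' : Type) [CommGroup G'] [Fintype G'] [DecidableEq G'],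
    ∀ (A' : SchurRing G') (φ : Finset G → Finset G'),
    IsAlgIso A A' φ →
    ∃ f : G → G', IsCombIso A A' f ∧ ∀ X ∈ A.parts, φ X = X.image f

/-!
Elements of `A` are exactly the elements of `ℤG` whose coefficients are constant on basic sets,
and `A` is closed under multiplication. For a prime `p ∤ |G|`, the Frobenius map of `(ℤ/p)G`
gives `T̲ ^ p ≡ T^(p)̲ (mod p)`; as the coefficients of `T^(p)̲` are `0` or `1`, `T^(p)` is an
`A`-set whenever `T` is. Factoring into primes extends this to every exponent coprime to `|G|`.
Finally `x ↦ x ^ m` is a bijection whose inverse is again such a power map, and a bijection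
that preserves `A`-sets in both directions maps each basic set, a minimal nonempty `A`-set,
onto a basic set.
-/

open Finset MonoidAlgebra

theorem coeff_grpInd {G : Type*} [Group G] [DecidableEq G] (X : Finset G) (g : G) :
    (grpInd X).coeff g = if g ∈ X then 1 else 0 := by
  simp [grpInd, coeff_sum, Finsupp.single_apply]

namespace SchurRing

variable {G : Type*} [Group G] [Fintype G] [DecidableEq G] (A : SchurRing G)

theorem grpInd_mem_carrier {X : Finset G} (hX : X ∈ A.parts) : grpInd X ∈ A.carrier :=
  Submodule.subset_span ⟨X, hX, rfl⟩

theorem mem_iff_mem_of_mem_parts {X Y : Finset G} (hX : X ∈ A.parts) (hY : Y ∈ A.parts)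
    {x y : G} (hx : x ∈ X) (hy : y ∈ X) : x ∈ Y ↔ y ∈ Y := by
  by_cases hXY : X = Y
  · subst hXY
    exact iff_of_true hx hy
  · have hdisj := disjoint_left.1 (A.pairwise_disjoint X hX Y hY hXY)
    exact iff_of_false (hdisj hx) (hdisj hy)

theorem mem_carrier_iff {v : MonoidAlgebra ℤ G} :
    v ∈ A.carrier ↔ ∀ X ∈ A.parts, ∀ x ∈ X, ∀ y ∈ X, v.coeff x = v.coeff y := by
  constructor
  · intro hv
    induction hv using Submodule.span_induction with
    | mem _ h =>
      obtain ⟨Y, hY, rfl⟩ := h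
      intro X hX x hx y hy
      simp only [coeff_grpInd, A.mem_iff_mem_of_mem_parts hX hY hx hy]
    | zero => simp
    | add u w _ _ hu hw =>
      intro X hX x hx y hy
      simp only [coeff_add, Finsupp.add_apply, hu X hX x hx y hy, hw X hX x hx y hy]
    | smul c u _ hu =>
      intro X hX x hx y hy
      simp only [coeff_smul_apply, hu X hX x hx y hy]
  · intro hv
    have hrep : ∀ X ∈ A.parts, Classical.epsilon (· ∈ X) ∈ X := fun X hX =>
      Classical.epsilon_spec (A.nonempty_mem X hX)
    have hsum : v = ∑ X ∈ A.parts, v.coeff (Classical.epsilon (· ∈ X)) • grpInd X := by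
      ext g
      obtain ⟨X, hX, hgX⟩ := A.cover g
      rw [coeff_sum, Finset.sum_apply', Finset.sum_eq_single X]
      · rw [coeff_smul_apply, coeff_grpInd, if_pos hgX, smul_eq_mul, mul_one]
        exact hv X hX g hgX _ (hrep X hX)
      · intro Y hY hYX
        rw [coeff_smul_apply, coeff_grpInd, if_neg, smul_zero]
        exact disjoint_right.1 (A.pairwise_disjoint Y hY X hX hYX) hgX
      · exact fun h => absurd hX h
    rw [hsum]
    exact Submodule.sum_mem _ fun X hX => Submodule.smul_mem _ _ (A.grpInd_mem_carrier hX)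

theorem isASet_iff {T : Finset G} :
    A.IsASet T ↔ ∀ X ∈ A.parts, ∀ x ∈ X, ∀ y ∈ X, (x ∈ T ↔ y ∈ T) := by
  refine (A.mem_carrier_iff).trans (forall₄_congr fun X _ x _ => forall₂_congr fun y _ => ?_)
  simp only [coeff_grpInd]
  split_ifs <;> simp_all

theorem subset_of_isASet {T Z : Finset G} (hT : A.IsASet T) (hZ : Z ∈ A.parts) {g : G}
    (hgZ : g ∈ Z) (hgT : g ∈ T) : Z ⊆ T :=
  fun _ hz => ((A.isASet_iff.1 hT) Z hZ _ hz g hgZ).2 hgT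

theorem mul_mem_carrier {u v : MonoidAlgebra ℤ G} (hu : u ∈ A.carrier) (hv : v ∈ A.carrier) :
    u * v ∈ A.carrier := by
  have hmul : A.carrier * A.carrier ≤ A.carrier := by
    rw [carrier, Submodule.span_mul_span, Submodule.span_le]
    rintro _ ⟨_, ⟨X, hX, rfl⟩, _, ⟨Y, hY, rfl⟩, rfl⟩
    obtain ⟨c, hc⟩ := A.mul_mem X hX Y hY
    show grpInd X * grpInd Y ∈ A.carrier
    rw [hc]
    exact Submodule.sum_mem _ fun Z hZ => Submodule.smul_mem _ _ (A.grpInd_mem_carrier hZ)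
  exact hmul (Submodule.mul_mem_mul hu hv)

theorem one_mem_carrier : (1 : MonoidAlgebra ℤ G) ∈ A.carrier := by
  simpa [grpInd, one_def] using A.grpInd_mem_carrier A.one_mem

theorem pow_mem_carrier {v : MonoidAlgebra ℤ G} (hv : v ∈ A.carrier) (k : ℕ) :
    v ^ k ∈ A.carrier := by
  induction k with
  | zero => simpa using A.one_mem_carrier
  | succ k ih => simpa [pow_succ] using A.mul_mem_carrier ih hv

theorem image_mem_parts_of_isASet {f g : G → G} (hgf : Function.LeftInverse g f)
    (hfg : Function.RightInverse g f) (hf : ∀ T, A.IsASet T → A.IsASet (T.image f))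
    (hg : ∀ T, A.IsASet T → A.IsASet (T.image g)) {X : Finset G} (hX : X ∈ A.parts) :
    X.image f ∈ A.parts := by
  obtain ⟨x, hx⟩ := A.nonempty_mem X hX
  obtain ⟨Z, hZ, hxZ⟩ := A.cover (f x)
  have hZX : Z ⊆ X.image f :=
    A.subset_of_isASet (hf X (A.grpInd_mem_carrier hX)) hZ hxZ (mem_image_of_mem f hx)
  have hXZ : X ⊆ Z.image g :=
    A.subset_of_isASet (hg Z (A.grpInd_mem_carrier hZ)) hX hx (mem_image.2 ⟨f x, hxZ, hgf x⟩)
  have hXZ' : X.image f ⊆ Z := by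
    intro _ hy
    obtain ⟨x', hx', rfl⟩ := mem_image.1 hy
    obtain ⟨z, hz, rfl⟩ := mem_image.1 (hXZ hx')
    rwa [hfg z]
  rwa [hXZ'.antisymm hZX]

end SchurRing

theorem zpow_eq_zpow_of_modEq_card {G : Type*} [Group G] [Fintype G] {a b : ℤ}
    (h : a ≡ b [ZMOD Fintype.card G]) (x : G) : x ^ a = x ^ b :=
  zpow_eq_zpow_iff_modEq.2 (h.of_dvd (Int.natCast_dvd_natCast.2 orderOf_dvd_card))

theorem zpow_zpow_eq_self_of_modEq_card {G : Type*} [Group G] [Fintype G] {a b : ℤ}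
    (h : a * b ≡ 1 [ZMOD Fintype.card G]) (x : G) : (x ^ a) ^ b = x := by
  rw [← zpow_mul, zpow_eq_zpow_of_modEq_card h, zpow_one]

theorem intCast_coeff_grpInd_pow {G : Type*} [CommGroup G] [DecidableEq G] {p : ℕ}
    [Fact p.Prime] {T : Finset G} (hinj : Function.Injective (· ^ p : G → G)) (x : G) :
    (((grpInd T ^ p).coeff x : ℤ) : ZMod p) = if x ∈ T.image (· ^ p) then 1 else 0 := by
  have : CharP (MonoidAlgebra (ZMod p) G) p := charP_of_injective_algebraMap' (ZMod p) p
  set φ := mapRingHom G (Int.castRingHom (ZMod p))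
  have hφ : ∀ S : Finset G, φ (grpInd S) = ∑ x ∈ S, single x 1 := fun S => by
    simp [φ, grpInd, map_sum, mapRingHom_single]
  have hfrob : φ (grpInd T ^ p) = φ (grpInd (T.image (· ^ p))) := by
    rw [map_pow, hφ, hφ, sum_pow_char, sum_image hinj.injOn]
    simp only [single_pow, one_pow]
  calc (((grpInd T ^ p).coeff x : ℤ) : ZMod p) = (φ (grpInd T ^ p)).coeff x := by
        rw [coeff_mapRingHom, eq_intCast]
    _ = _ := by
      rw [hfrob, coeff_mapRingHom, coeff_grpInd]
      split_ifs <;> simp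

namespace SchurRing

variable {G : Type*} [CommGroup G] [Fintype G] [DecidableEq G] (A : SchurRing G)

theorem isASet_image_pow_of_prime {p : ℕ} (hp : p.Prime) (hpG : p.Coprime (Fintype.card G))
    {T : Finset G} (hT : A.IsASet T) : A.IsASet (T.image (· ^ p)) := by
  have : Fact p.Prime := ⟨hp⟩
  have hinj : Function.Injective (· ^ p : G → G) :=
    (Nat.Coprime.pow_left_bijective (by rwa [Nat.card_eq_fintype_card, Nat.coprime_comm])).1
  have hTp := (A.mem_carrier_iff.1 (A.pow_mem_carrier hT p))
  refine A.isASet_iff.2 fun X hX x hx y hy => ?_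
  have hxy := congrArg (fun n : ℤ => (n : ZMod p)) (hTp X hX x hx y hy)
  simp only [intCast_coeff_grpInd_pow hinj] at hxy
  split_ifs at hxy with hxT hyT hyT
  exacts [iff_of_true hxT hyT, absurd hxy one_ne_zero, absurd hxy zero_ne_one,
    iff_of_false hxT hyT]

theorem isASet_image_pow {k : ℕ} (hk : k.Coprime (Fintype.card G)) {T : Finset G}
    (hT : A.IsASet T) : A.IsASet (T.image (· ^ k)) := by
  induction k using Nat.recOnMul generalizing T with
  | zero =>
    have : Subsingleton G := Fintype.card_le_one_iff_subsingleton.1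
      (Nat.coprime_zero_left _ |>.1 hk).le
    exact A.isASet_iff.2 fun X _ x _ y _ => by rw [Subsingleton.elim x y]
  | one => simpa using hT
  | prime p hp => exact A.isASet_image_pow_of_prime hp hk hT
  | mul a b ha hb =>
    have hab := ha (Nat.Coprime.coprime_mul_right hk) hT
    simpa [image_image, Function.comp_def, pow_mul] using hb (Nat.Coprime.coprime_mul_left hk) hab

theorem isASet_image_zpow {m : ℤ} (hm : IsCoprime m (Fintype.card G)) {T : Finset G}
    (hT : A.IsASet T) : A.IsASet (T.image (· ^ m)) := by
  have hmod : 0 ≤ m % Fintype.card G := Int.emod_nonneg m (by simp)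
  have hk : ((m % Fintype.card G).toNat : ℤ) ≡ m [ZMOD Fintype.card G] := by
    rw [Int.toNat_of_nonneg hmod]
    exact Int.mod_modEq m _
  have hcop : (m % Fintype.card G).toNat.Coprime (Fintype.card G) := by
    rw [← Nat.isCoprime_iff_coprime, Int.toNat_of_nonneg hmod, Int.emod_def, sub_eq_add_neg,
      ← mul_neg]
    exact hm.add_mul_left_left _
  convert A.isASet_image_pow hcop hT using 2
  ext x
  rw [← zpow_natCast, zpow_eq_zpow_of_modEq_card hk]

end SchurRing

/-- Schur's first multiplier theorem: for `m` coprime to `|G|`,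
`X^(m)` is again a basic set, i.e. `g ↦ g^m` is a Cayley isomorphism of `A`. -/
theorem stmt3 {G : Type*} [CommGroup G] [Fintype G] [DecidableEq G] (A : SchurRing G)
    (X : Finset G) (hX : X ∈ A.parts) (m : ℤ) (hm : Int.gcd m (Fintype.card G) = 1) :
    X.image (fun x => x ^ m) ∈ A.parts := by
  obtain ⟨a, b, hab⟩ := Int.isCoprime_iff_gcd_eq_one.2 hm
  have hma : m * a ≡ 1 [ZMOD Fintype.card G] := Int.modEq_iff_dvd.2 ⟨b, by linarith⟩
  have ham : a * m ≡ 1 [ZMOD Fintype.card G] := mul_comm a m ▸ hma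
  exact A.image_mem_parts_of_isASet (g := (· ^ a)) (zpow_zpow_eq_self_of_modEq_card hma)
    (zpow_zpow_eq_self_of_modEq_card ham) (fun _ => A.isASet_image_zpow ⟨a, b, hab⟩)
    (fun _ => A.isASet_image_zpow ⟨m, b, by linarith⟩) hX
end

section
/- Let p ≥ 3 be prime, G = E × P with E = C₂ × C₂ = ⟨a⟩ × ⟨b⟩ and P = ⟨z⟩ cyclic of order p. Let σ₂ ∈ Aut(E) be the involution swapping a and b, K ≤ Aut(P) of even order with index-2 subgroup M and generator θ, and ψ: ⟨σ₂⟩ → K/M the isomorphism σ₂ ↦ Mθ. Similarly let G' = E' × P with E' = ⟨c⟩ cyclic of order 4, σ₃ ∈ Aut(E') the inversion automorphism, and ψ': ⟨σ₃⟩ → K/M with σ₃ ↦ Mθ. Then the cyclotomic S-rings Cyc(A(⟨σ₂⟩,K,ψ), G) and Cyc(A(⟨σ₃⟩,K,ψ'), G') are not algebraically isomorphic. -/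
open scoped BigOperators

/-! With `t` a generator of `C_p` and `z = (1, t²)`, the structure constant `c^Z_{X,X}` (for
`z ∈ Z`) of an S-ring over an abelian group has the parity of the number of square roots of `z`
in `X`, since the other solutions of `xy = z` are exchanged in pairs by `(x, y) ↦ (y, x)`.
Basic sets are disjoint, so an algebraic isomorphism sends the basic sets with an odd number of
square roots of `z` to distinct basic sets containing square roots of one `z'`, and an element
of `C₄ × C_p` has at most two square roots. On the other side, the only square root of `z` in the
orbit of `(e, t)`, `e ∈ C₂ × C₂`, is `(e, t)` itself: an element `(σ₂^i e, κ t)` of the orbit with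
`κ t = t` has `κ = 1`, hence `θ^i ∈ M`, so `i` is even and `σ₂^i = 1`. These four orbits give
four such basic sets. -/

open Finset

lemma grpInd_mul_grpInd_coeff {G : Type*} [Group G] [DecidableEq G] (X Y : Finset G) (z : G) :
    (grpInd X * grpInd Y).coeff z = #{q ∈ X ×ˢ Y | q.1 * q.2 = z} := by
  rw [grpInd, grpInd, sum_mul_sum, MonoidAlgebra.coeff_sum, sum_apply', card_filter,
    sum_product]
  push_cast
  refine sum_congr rfl fun x _ => ?_
  rw [MonoidAlgebra.coeff_sum, sum_apply']
  refine sum_congr rfl fun y _ => ?_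
  rw [MonoidAlgebra.single_mul_single, one_mul, MonoidAlgebra.coeff_single,
    Finsupp.single_apply]

lemma card_modEq_card_filter_eq_self {α : Type*} [DecidableEq α] {s : Finset α} {f : α → α}
    (hs : ∀ a ∈ s, f a ∈ s) (hf : ∀ a ∈ s, f (f a) = a) :
    #s ≡ #{a ∈ s | f a = a} [MOD 2] := by
  have hfree : ((#{a ∈ s | ¬ f a = a} : ℕ) : ZMod 2) = 0 := by
    rw [card_eq_sum_ones, Nat.cast_sum, Nat.cast_one]
    refine sum_involution (fun a _ => f a) (fun _ _ => by decide) (fun a ha _ => ?_)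
      (fun a ha => ?_) (fun a ha => hf a (mem_filter.mp ha).1)
    · exact (mem_filter.mp ha).2
    · obtain ⟨has, hfa⟩ := mem_filter.mp ha
      exact mem_filter.mpr ⟨hs a has, fun h => hfa (h.symm.trans (hf a has))⟩
  rw [← card_filter_add_card_filter_not (fun a => f a = a)]
  refine (ZMod.natCast_eq_natCast_iff _ _ 2).mp ?_
  rw [Nat.cast_add, hfree, add_zero]

lemma odd_coeff_grpInd_mul_self_iff {G : Type*} [CommGroup G] [DecidableEq G] (X : Finset G)
    (z : G) : Odd ((grpInd X * grpInd X).coeff z) ↔ Odd #{x ∈ X | x * x = z} := by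
  have hdiag : #{q ∈ {q ∈ X ×ˢ X | q.1 * q.2 = z} | q.swap = q} = #{x ∈ X | x * x = z} := by
    refine card_nbij' Prod.fst (fun x => (x, x)) ?_ ?_ ?_ ?_
    · rintro ⟨x, y⟩ hq
      simp only [mem_coe, mem_filter, mem_product, Prod.swap_prod_mk, Prod.mk.injEq] at hq
      obtain ⟨⟨⟨hx, -⟩, hz⟩, rfl, -⟩ := hq
      exact mem_filter.mpr ⟨hx, hz⟩
    · intro x hx
      simp_all
    · rintro ⟨x, y⟩ hq
      simp only [mem_coe, mem_filter, Prod.swap_prod_mk, Prod.mk.injEq] at hq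
      obtain ⟨-, rfl, -⟩ := hq
      rfl
    · intro x hx
      rfl
  have hswap : #{q ∈ X ×ˢ X | q.1 * q.2 = z} ≡ #{q ∈ {q ∈ X ×ˢ X | q.1 * q.2 = z} | q.swap = q}
      [MOD 2] := by
    refine card_modEq_card_filter_eq_self (fun q hq => ?_) (fun q _ => Prod.swap_swap q)
    simp only [mem_filter, mem_product, Prod.fst_swap, Prod.snd_swap] at hq ⊢
    exact ⟨hq.1.symm, mul_comm q.2 q.1 ▸ hq.2⟩
  rw [grpInd_mul_grpInd_coeff, Int.odd_coe_nat, ← hdiag, Nat.odd_iff, Nat.odd_iff, hswap]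

lemma IsAlgIso.card_filter_odd_le {G G' : Type*} [CommGroup G] [Fintype G] [DecidableEq G]
    [CommGroup G'] [Fintype G'] [DecidableEq G'] {A : SchurRing G} {A' : SchurRing G'}
    {φ : Finset G → Finset G'} (hφ : IsAlgIso A A' φ) {Z : Finset G} (hZ : Z ∈ A.parts)
    {z : G} (hz : z ∈ Z) {z' : G'} (hz' : z' ∈ φ Z) :
    #{X ∈ A.parts | Odd #{x ∈ X | x * x = z}} ≤ #{x : G' | x * x = z'} := by
  set S := {X ∈ A.parts | Odd #{x ∈ X | x * x = z}}
  have hroot : ∀ X ∈ S, ({x ∈ φ X | x * x = z'}).Nonempty := by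
    intro X hX
    obtain ⟨hXA, hodd⟩ := mem_filter.mp hX
    rw [← odd_coeff_grpInd_mul_self_iff, hφ.2 X hXA X hXA Z hZ z hz z' hz',
      odd_coeff_grpInd_mul_self_iff] at hodd
    exact card_pos.mp hodd.pos
  have hdisj : (S : Set (Finset G)).PairwiseDisjoint fun X => {x ∈ φ X | x * x = z'} := by
    intro X hX Y hY hXY
    have hXA := (mem_filter.mp hX).1
    have hYA := (mem_filter.mp hY).1
    exact disjoint_filter_filter (A'.pairwise_disjoint _ (hφ.1.mapsTo hXA) _
      (hφ.1.mapsTo hYA) fun h => hXY (hφ.1.injOn hXA hYA h))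
  calc #S ≤ #(S.biUnion fun X => {x ∈ φ X | x * x = z'}) := card_le_card_biUnion hdisj hroot
    _ ≤ #{x : G' | x * x = z'} := card_le_card fun x hx => by
      obtain ⟨X, -, hx⟩ := mem_biUnion.mp hx
      exact mem_filter.mpr ⟨mem_univ x, (mem_filter.mp hx).2⟩

lemma mul_self_injective_of_odd_card {P : Type*} [Group P] (hP : Odd (Nat.card P)) :
    Function.Injective fun x : P => x * x := by
  intro x y h
  refine (powCoprime (Nat.coprime_two_right.mpr hP)).injective ?_
  simpa only [powCoprime_apply, sq] using h

lemma card_filter_mul_self_eq_le_of_odd_card {H P : Type*} [Group H] [Group P] [Fintype H]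
    [Fintype P] [DecidableEq H] [DecidableEq P] (hP : Odd (Nat.card P)) (z : H × P) :
    #{x : H × P | x * x = z} ≤ #{h : H | h * h = z.1} := by
  have hprod : ({x : H × P | x * x = z} : Finset (H × P)) =
      ({h : H | h * h = z.1} : Finset H) ×ˢ ({u : P | u * u = z.2} : Finset P) := by
    ext x
    simp [Prod.ext_iff]
  have hP1 : #{u : P | u * u = z.2} ≤ 1 := card_le_one.mpr fun u hu v hv =>
    mul_self_injective_of_odd_card hP ((mem_filter.mp hu).2.trans (mem_filter.mp hv).2.symm)
  rw [hprod, card_product]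
  exact (Nat.mul_le_mul_left _ hP1).trans_eq (mul_one _)

lemma card_filter_mul_self_eq_le_two (w : Multiplicative (ZMod 4)) :
    #{h : Multiplicative (ZMod 4) | h * h = w} ≤ 2 := by
  revert w
  decide

lemma even_of_zpow_mem {G : Type*} [Group G] {M : Subgroup G} {θ : G} (hθ : θ ∉ M)
    (hθ2 : θ ^ 2 ∈ M) {i : ℤ} (hi : θ ^ i ∈ M) : Even i := by
  obtain ⟨k, rfl | rfl⟩ := Int.even_or_odd' i
  · exact even_two_mul k
  · have hk : θ ^ (2 * k + 1) = (θ ^ 2) ^ k * θ := by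
      rw [zpow_add_one, zpow_mul, zpow_ofNat]
    rw [hk] at hi
    exact absurd ((M.mul_mem_cancel_left (M.zpow_mem hθ2 k)).mp hi) hθ

lemma MulAut.eq_one_of_apply_eq_self {P : Type*} [Group P] {t : P}
    (ht : Subgroup.zpowers t = ⊤) {κ : MulAut P} (hκ : κ t = t) : κ = 1 := by
  ext y
  obtain ⟨n, rfl⟩ := Subgroup.mem_zpowers_iff.mp (ht ▸ Subgroup.mem_top y)
  rw [map_zpow, hκ, MulAut.one_apply]

section SubdirectOrbit

variable {E P : Type*} [Group E] [Group P] [Finite E] [Finite P]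
  {σ : MulAut E} {K M : Subgroup (MulAut P)} {θ : MulAut P}

/- The orbit of `g` under `A(⟨σ⟩, K, ψ) = {(σ^i, κ) : κ ∈ K, Mκ = Mθ^i}`, where `ψ(σ) = Mθ`. -/
variable (σ K M θ) in
noncomputable def subdirectOrbit (g : E × P) : Finset (E × P) :=
  (Set.toFinite {w : E × P | ∃ sk : MulAut E × MulAut P,
    (∃ i : ℤ, sk.1 = σ ^ i ∧ sk.2 ∈ K ∧ sk.2 * (θ ^ i)⁻¹ ∈ M) ∧
    w = (sk.1 g.1, sk.2 g.2)}).toFinset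

lemma mem_subdirectOrbit {g x : E × P} :
    x ∈ subdirectOrbit σ K M θ g ↔
      ∃ i : ℤ, ∃ κ ∈ K, κ * (θ ^ i)⁻¹ ∈ M ∧ x = ((σ ^ i) g.1, κ g.2) := by
  simp only [subdirectOrbit, Set.Finite.mem_toFinset, Set.mem_ofPred_eq, Prod.exists]
  constructor
  · rintro ⟨_, κ, ⟨i, rfl, hκK, hκM⟩, rfl⟩
    exact ⟨i, κ, hκK, hκM, rfl⟩
  · rintro ⟨i, κ, hκK, hκM, rfl⟩
    exact ⟨_, κ, ⟨i, rfl, hκK, hκM⟩, rfl⟩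

lemma self_mem_subdirectOrbit (g : E × P) : g ∈ subdirectOrbit σ K M θ g :=
  mem_subdirectOrbit.mpr ⟨0, 1, K.one_mem, by simp [M.one_mem], by simp⟩

lemma eq_of_mem_subdirectOrbit_of_snd_eq (hσ : σ ^ 2 = 1) (hθ : θ ∉ M) (hθ2 : θ ^ 2 ∈ M)
    {t : P} (ht : Subgroup.zpowers t = ⊤) {e : E} {x : E × P}
    (hx : x ∈ subdirectOrbit σ K M θ (e, t)) (hxt : x.2 = t) : x = (e, t) := by
  obtain ⟨i, κ, -, hκM, rfl⟩ := mem_subdirectOrbit.mp hx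
  obtain rfl : κ = 1 := MulAut.eq_one_of_apply_eq_self ht hxt
  obtain ⟨k, rfl⟩ := even_of_zpow_mem hθ hθ2 (M.inv_mem_iff.mp (by simpa using hκM))
  rw [← two_mul, zpow_mul, zpow_ofNat, hσ, one_zpow]
  rfl

lemma filter_mul_self_subdirectOrbit [DecidableEq E] [DecidableEq P] (hP : Odd (Nat.card P))
    (hσ : σ ^ 2 = 1) (hθ : θ ∉ M) (hθ2 : θ ^ 2 ∈ M) {t : P} (ht : Subgroup.zpowers t = ⊤)
    {e : E} (he : e * e = 1) :
    {x ∈ subdirectOrbit σ K M θ (e, t) | x * x = (1, t * t)} = {(e, t)} := by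
  refine eq_singleton_iff_unique_mem.mpr ⟨mem_filter.mpr ⟨self_mem_subdirectOrbit _, ?_⟩, ?_⟩
  · simp [he]
  · intro x hx
    obtain ⟨hxX, hxx⟩ := mem_filter.mp hx
    exact eq_of_mem_subdirectOrbit_of_snd_eq hσ hθ hθ2 ht hxX
      (mul_self_injective_of_odd_card hP (congrArg Prod.snd hxx))

end SubdirectOrbit

lemma card_le_card_filter_odd_mul_self {E P : Type*} [Group E] [Group P] [Fintype E]
    [Fintype P] [DecidableEq E] [DecidableEq P] {σ : MulAut E} {K M : Subgroup (MulAut P)}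
    {θ : MulAut P} {A : SchurRing (E × P)} (hA : ∀ g, subdirectOrbit σ K M θ g ∈ A.parts)
    (hE : ∀ e : E, e * e = 1) (hP : Odd (Nat.card P)) (hσ : σ ^ 2 = 1) (hθ : θ ∉ M)
    (hθ2 : θ ^ 2 ∈ M) {t : P} (ht : Subgroup.zpowers t = ⊤) :
    Fintype.card E ≤ #{X ∈ A.parts | Odd #{x ∈ X | x * x = (1, t * t)}} := by
  have hroots (e : E) := filter_mul_self_subdirectOrbit (K := K) hP hσ hθ hθ2 ht (hE e)
  refine card_le_card_of_injOn (fun e => subdirectOrbit σ K M θ (e, t)) (fun e _ => ?_)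
    (fun e _ e' _ h => ?_)
  · rw [mem_coe, mem_filter, hroots, card_singleton]
    exact ⟨hA _, odd_one⟩
  · have h' : ({(e, t)} : Finset (E × P)) = {(e', t)} := by
      rw [← hroots e, ← hroots e']
      exact congrArg (filter _) h
    exact (Prod.ext_iff.mp (singleton_injective h')).1

lemma sq_eq_one_of_swap_generators {σ : MulAut (Multiplicative (ZMod 2 × ZMod 2))}
    (ha : σ (.ofAdd (1, 0)) = .ofAdd (0, 1)) (hb : σ (.ofAdd (0, 1)) = .ofAdd (1, 0)) :
    σ ^ 2 = 1 := by
  have hcases : ∀ x : Multiplicative (ZMod 2 × ZMod 2), x = 1 ∨ x = .ofAdd (1, 0) ∨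
      x = .ofAdd (0, 1) ∨ x = .ofAdd (1, 0) * .ofAdd (0, 1) := by decide
  refine MulEquiv.ext fun x => ?_
  rcases hcases x with rfl | rfl | rfl | rfl <;> simp [sq, ha, hb]

lemma zpowers_ofAdd_one (n : ℕ) [NeZero n] :
    Subgroup.zpowers (Multiplicative.ofAdd (1 : ZMod n)) = ⊤ :=
  (Subgroup.eq_top_iff' _).mpr fun x => by
    simpa [← ofAdd_nsmul] using
      Subgroup.npow_mem_zpowers (Multiplicative.ofAdd (1 : ZMod n)) x.toAdd.val

lemma sq_mem_of_relIndex_eq_two {G : Type*} [Group G] {K M : Subgroup G}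
    (h : M.relIndex K = 2) {θ : G} (hθ : θ ∈ K) : θ ^ 2 ∈ M :=
  Subgroup.mem_subgroupOf.mp (Subgroup.sq_mem_of_index_two h ⟨θ, hθ⟩)

lemma notMem_of_relIndex_eq_two {G : Type*} [Group G] {K M : Subgroup G}
    (h : M.relIndex K = 2) {θ : G} (hgen : ∀ κ ∈ K, ∃ i : ℤ, κ = θ ^ i) : θ ∉ M := by
  intro hθ
  have hKM : K ≤ M := fun κ hκ => by
    obtain ⟨i, rfl⟩ := hgen κ hκ
    exact M.zpow_mem hθ i
  rw [Subgroup.relIndex_eq_one.mpr hKM] at h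
  omega

theorem stmt13_general (p : ℕ) [Fact p.Prime] (hp3 : 3 ≤ p)
    (σ₂ : MulAut (Multiplicative (ZMod 2 × ZMod 2)))
    (hσ₂a : σ₂ (Multiplicative.ofAdd ((1, 0) : ZMod 2 × ZMod 2)) =
      Multiplicative.ofAdd ((0, 1) : ZMod 2 × ZMod 2))
    (hσ₂b : σ₂ (Multiplicative.ofAdd ((0, 1) : ZMod 2 × ZMod 2)) =
      Multiplicative.ofAdd ((1, 0) : ZMod 2 × ZMod 2))
    (K M : Subgroup (MulAut (Multiplicative (ZMod p))))
    (hind : M.relIndex K = 2)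
    (θ : MulAut (Multiplicative (ZMod p))) (hθK : θ ∈ K)
    (hθgen : ∀ κ ∈ K, ∃ i : ℤ, κ = θ ^ i)
    (A : SchurRing (Multiplicative (ZMod 2 × ZMod 2) × Multiplicative (ZMod p)))
    (hA : ∀ X, X ∈ A.parts ↔
      ∃ g : Multiplicative (ZMod 2 × ZMod 2) × Multiplicative (ZMod p),
        X = (Set.toFinite
          {w : Multiplicative (ZMod 2 × ZMod 2) × Multiplicative (ZMod p) |
            ∃ sk : MulAut (Multiplicative (ZMod 2 × ZMod 2)) ×
                MulAut (Multiplicative (ZMod p)),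
              (∃ i : ℤ, sk.1 = σ₂ ^ i ∧ sk.2 ∈ K ∧ sk.2 * (θ ^ i)⁻¹ ∈ M) ∧
              w = (sk.1 g.1, sk.2 g.2)}).toFinset)
    (A' : SchurRing (Multiplicative (ZMod 4) × Multiplicative (ZMod p))) :
    ¬ ∃ φ, IsAlgIso A A' φ := by
  rintro ⟨φ, hφ⟩
  set t := Multiplicative.ofAdd (1 : ZMod p)
  have hP : Odd (Nat.card (Multiplicative (ZMod p))) := by
    rw [Nat.card_eq_fintype_card, Fintype.card_multiplicative, ZMod.card]
    exact (Fact.out : p.Prime).odd_of_ne_two (by omega)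
  obtain ⟨Z, hZ, hzZ⟩ := A.cover (1, t * t)
  obtain ⟨z', hz'⟩ := A'.nonempty_mem _ (hφ.1.mapsTo hZ)
  have hfour : 4 ≤ #{X ∈ A.parts | Odd #{x ∈ X | x * x = (1, t * t)}} :=
    card_le_card_filter_odd_mul_self (fun g => (hA _).mpr ⟨g, rfl⟩) (by decide) hP
      (sq_eq_one_of_swap_generators hσ₂a hσ₂b) (notMem_of_relIndex_eq_two hind hθgen)
      (sq_mem_of_relIndex_eq_two hind hθK) (zpowers_ofAdd_one p)
  have htwo : #{x : Multiplicative (ZMod 4) × Multiplicative (ZMod p) | x * x = z'} ≤ 2 :=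
    (card_filter_mul_self_eq_le_of_odd_card hP z').trans (card_filter_mul_self_eq_le_two _)
  have hle := hφ.card_filter_odd_le hZ hzZ hz'
  omega

/-- the cyclotomic S-rings `Cyc(A(⟨σ₂⟩,K,ψ), (C₂×C₂)×C_p)` and
`Cyc(A(⟨σ₃⟩,K,ψ'), C₄×C_p)` are not algebraically isomorphic. Here `σ₂` swaps the two
generators of `C₂×C₂`, `σ₃` is inversion on `C₄`, `K ≤ Aut(C_p)` has even order with
index-2 subgroup `M` and generator `θ`, and the subdirect products are
`{(σ^i, κ) : κ ∈ K, Mκ = Mθ^i}`, acting componentwise; the basic sets are the orbits. -/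
theorem stmt13 (p : ℕ) [Fact p.Prime] (hp3 : 3 ≤ p)
    (σ₂ : MulAut (Multiplicative (ZMod 2 × ZMod 2)))
    (hσ₂a : σ₂ (Multiplicative.ofAdd ((1, 0) : ZMod 2 × ZMod 2)) =
      Multiplicative.ofAdd ((0, 1) : ZMod 2 × ZMod 2))
    (hσ₂b : σ₂ (Multiplicative.ofAdd ((0, 1) : ZMod 2 × ZMod 2)) =
      Multiplicative.ofAdd ((1, 0) : ZMod 2 × ZMod 2))
    (σ₃ : MulAut (Multiplicative (ZMod 4)))
    (hσ₃ : ∀ x : Multiplicative (ZMod 4), σ₃ x = x⁻¹)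
    (K M : Subgroup (MulAut (Multiplicative (ZMod p))))
    (hMK : M ≤ K) (hind : M.relIndex K = 2) (heven : 2 ∣ Nat.card K)
    (θ : MulAut (Multiplicative (ZMod p))) (hθK : θ ∈ K)
    (hθgen : ∀ κ ∈ K, ∃ i : ℤ, κ = θ ^ i)
    (A : SchurRing (Multiplicative (ZMod 2 × ZMod 2) × Multiplicative (ZMod p)))
    (hA : ∀ X, X ∈ A.parts ↔
      ∃ g : Multiplicative (ZMod 2 × ZMod 2) × Multiplicative (ZMod p),
        X = (Set.toFinite
          {w : Multiplicative (ZMod 2 × ZMod 2) × Multiplicative (ZMod p) |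
            ∃ sk : MulAut (Multiplicative (ZMod 2 × ZMod 2)) ×
                MulAut (Multiplicative (ZMod p)),
              (∃ i : ℤ, sk.1 = σ₂ ^ i ∧ sk.2 ∈ K ∧ sk.2 * (θ ^ i)⁻¹ ∈ M) ∧
              w = (sk.1 g.1, sk.2 g.2)}).toFinset)
    (A' : SchurRing (Multiplicative (ZMod 4) × Multiplicative (ZMod p)))
    (hA' : ∀ X, X ∈ A'.parts ↔
      ∃ g : Multiplicative (ZMod 4) × Multiplicative (ZMod p),
        X = (Set.toFinite
          {w : Multiplicative (ZMod 4) × Multiplicative (ZMod p) |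
            ∃ sk : MulAut (Multiplicative (ZMod 4)) × MulAut (Multiplicative (ZMod p)),
              (∃ i : ℤ, sk.1 = σ₃ ^ i ∧ sk.2 ∈ K ∧ sk.2 * (θ ^ i)⁻¹ ∈ M) ∧
              w = (sk.1 g.1, sk.2 g.2)}).toFinset) :
    ¬ ∃ φ, IsAlgIso A A' φ :=
  stmt13_general p hp3 σ₂ hσ₂a hσ₂b K M hind θ hθK hθgen A hA A'
end
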